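/- Let D be a p-group of order p^k. Then the derived length of D is at most (k+1)/2. -/

import Mathlib

/-!
If `D` is a finite `p`-group with `D' ≠ 1`, then `|D : D'| ≥ p²`: otherwise `D / D'` is cyclic,
and a nilpotent group with cyclic abelianization is abelian. Hence `|D'| ≤ p ^ (k - 2)`, and
induction on `k` applied to `D'` gives `dl D ≤ dl D' + 1 ≤ (k - 1) / 2 + 1 = (k + 1) / 2`.
-/

open Subgroup
open scoped commutatorElement

/-- The derived length of a group: the least `n` with `derivedSeries G n = ⊥`. -/
noncomputable def derivedLength (G : Type*) [Group G] : ℕ :=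
  sInf {n : ℕ | derivedSeries G n = ⊥}

section

variable {G : Type*} [Group G]

theorem Subgroup.eq_bot_of_le_commutator_top [Group.IsNilpotent G] {H : Subgroup G}
    (h : H ≤ ⁅H, (⊤ : Subgroup G)⁆) : H = ⊥ := by
  obtain ⟨n, hn⟩ := nilpotent_iff_lowerCentralSeries.mp ‹Group.IsNilpotent G›
  have h_le : ∀ n, H ≤ lowerCentralSeries ⊤ n := by
    intro n
    induction n with
    | zero => exact le_top
    | succ n ih => exact h.trans (commutator_mono ih le_top)
  rw [eq_bot_iff, ← hn]
  exact h_le n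

/-- In `G ⧸ ⁅G', G⁆` the image of `G'` is central with cyclic quotient, so `G ⧸ ⁅G', G⁆` is
abelian. -/
theorem commutator_le_commutator_top_of_isCyclic [IsCyclic (Abelianization G)] :
    commutator G ≤ ⁅commutator G, (⊤ : Subgroup G)⁆ := by
  set N := ⁅commutator G, (⊤ : Subgroup G)⁆
  let f : G ⧸ N →* Abelianization G := QuotientGroup.lift N Abelianization.of <| by
    rw [Abelianization.ker_of]
    exact commutator_mono le_top le_top
  have h_ker : f.ker ≤ center (G ⧸ N) := by
    intro x hx
    induction x using QuotientGroup.induction_on with | H g => ?_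
    have hg : g ∈ commutator G := by
      rw [← Abelianization.ker_of]
      exact hx
    refine mem_center_iff.mpr fun y => ?_
    induction y using QuotientGroup.induction_on with | H h => ?_
    refine (commutatorElement_eq_one_iff_mul_comm.mp ?_).symm
    rw [← QuotientGroup.mk'_apply, ← QuotientGroup.mk'_apply, ← map_commutatorElement,
      QuotientGroup.mk'_apply, QuotientGroup.eq_one_iff]
    exact commutator_mem_commutator hg (mem_top h)
  have h_comm := f.isMulCommutative_of_isCyclic_of_ker_le_center h_ker
  refine commutator_le.mpr fun g _ h _ => (QuotientGroup.eq_one_iff _).mp ?_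
  rw [← QuotientGroup.mk'_apply, map_commutatorElement, commutatorElement_eq_one_iff_mul_comm]
  exact h_comm.is_comm.comm _ _

theorem commutator_eq_bot_of_index_dvd_prime [Group.IsNilpotent G] {p : ℕ} (hp : p.Prime)
    (h : (commutator G).index ∣ p) : commutator G = ⊥ := by
  have : IsCyclic (Abelianization G) := by
    rcases (Nat.dvd_prime hp).mp h with h_one | h_prime
    · have : Subsingleton (Abelianization G) :=
        (Nat.card_eq_one_iff_unique.mp ((index_eq_card _).symm.trans h_one)).1
      infer_instance
    · have := Fact.mk hp
      exact isCyclic_of_prime_card ((index_eq_card _).symm.trans h_prime)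
  exact eq_bot_of_le_commutator_top commutator_le_commutator_top_of_isCyclic

theorem IsPGroup.commutator_eq_bot_or_sq_dvd_index {p : ℕ} [hp : Fact p.Prime] [Finite G]
    (hG : IsPGroup p G) : commutator G = ⊥ ∨ p ^ 2 ∣ (commutator G).index := by
  obtain ⟨n, hn⟩ := hG.index (commutator G)
  rcases Nat.lt_or_ge n 2 with hn2 | hn2
  · have := hG.isNilpotent
    refine .inl (commutator_eq_bot_of_index_dvd_prime hp.out ?_)
    rw [hn]
    exact (pow_dvd_pow p (Nat.le_of_lt_succ hn2)).trans (pow_one p).dvd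
  · rw [hn]
    exact .inr (pow_dvd_pow p hn2)

theorem derivedSeries_derivedLength [Group.IsSolvable G] :
    derivedSeries G (derivedLength G) = ⊥ :=
  Nat.sInf_mem Group.IsSolvable.solvable

theorem map_subtype_derivedSeries_commutator (n : ℕ) :
    (derivedSeries (commutator G) n).map (commutator G).subtype = derivedSeries G (n + 1) := by
  induction n with
  | zero =>
    rw [derivedSeries_zero, ← MonoidHom.range_eq_map, range_subtype, derivedSeries_one]
  | succ n ih =>
    rw [derivedSeries_succ, map_commutator, ih, ← derivedSeries_succ]

theorem derivedLength_le_derivedLength_commutator_add_one [Group.IsSolvable (commutator G)] :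
    derivedLength G ≤ derivedLength (commutator G) + 1 :=
  Nat.sInf_le <| by
    show derivedSeries G _ = ⊥
    rw [← map_subtype_derivedSeries_commutator, derivedSeries_derivedLength, Subgroup.map_bot]

end

/-- A `p`-group of order `p ^ k` has derived length at most `(k + 1) / 2`. -/
theorem derivedLength_le_of_card_pow (p k : ℕ) (hp : p.Prime) (D : Type*) [Group D]
    [Fintype D] (hD : Fintype.card D = p ^ k) :
    derivedLength D ≤ (k + 1) / 2 := by
  induction k using Nat.strong_induction_on generalizing D with | _ k ih => ?_
  have : Fact p.Prime := ⟨hp⟩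
  have hcard : Nat.card D = p ^ k := by rw [Nat.card_eq_fintype_card, hD]
  have hpD : IsPGroup p D := .of_card hcard
  rcases Nat.eq_zero_or_pos k with rfl | hk
  · have : Subsingleton D := Fintype.card_le_one_iff_subsingleton.mp (by simp [hD])
    exact Nat.sInf_le (Subsingleton.elim _ _)
  obtain ⟨j, hj⟩ := IsPGroup.iff_card.mp (hpD.to_subgroup (commutator D))
  have hjk : j = 0 ∨ j + 2 ≤ k := by
    rcases hpD.commutator_eq_bot_or_sq_dvd_index with hbot | hdvd
    · rw [hbot, card_bot, eq_comm, Nat.pow_eq_one] at hj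
      exact .inl (hj.resolve_left hp.ne_one)
    · rw [← Nat.pow_dvd_pow_iff_le_right hp.one_lt, pow_add, ← hj, ← hcard,
        ← card_mul_index (commutator D)]
      exact .inr (mul_dvd_mul_left _ hdvd)
  have := hpD.isNilpotent
  have : Fintype (commutator D) := Fintype.ofFinite _
  have hD' := ih j (by omega) (commutator D) (by rw [← Nat.card_eq_fintype_card, hj])
  have hstep := derivedLength_le_derivedLength_commutator_add_one (G := D)
  omega
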